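/- For any Boolean network f of dimension n and any binary configurations x, y ∈ 𝔹^n, if y is reachable from x under the (generalized) asynchronous semantics (allowing simultaneous update of any nonempty set of components to their f-values) then y is reachable from x under the most permissive semantics. -/
import Mathlib


inductive PState : Type
  | zero | up | down | one
deriving DecidableEq

def PState.ofBool : Bool → PState
  | false => .zero
  | true  => .one

def PState.isBool (p : PState) : Prop := p = .zero ∨ p = .one

abbrev BN (n : ℕ) := (Fin n → Bool) → Fin n → Bool

def gamma {n : ℕ} (x : Fin n → PState) : Set (Fin n → Bool) :=
  {b | ∀ i (v : Bool), x i = PState.ofBool v → b i = v}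

def mpStep {n : ℕ} (f : BN n) (x y : Fin n → PState) : Prop :=
  ∃ i : Fin n, x i ≠ y i ∧ (∀ j, j ≠ i → x j = y j) ∧
    ((y i = .up ∧ x i ≠ .one ∧ ∃ z ∈ gamma x, f z i = true) ∨
     (y i = .one ∧ x i = .up) ∨
     (y i = .down ∧ x i ≠ .zero ∧ ∃ z ∈ gamma x, f z i = false) ∨
     (y i = .zero ∧ x i = .down))

def mpReachP {n : ℕ} (f : BN n) : (Fin n → PState) → (Fin n → PState) → Prop :=
  Relation.ReflTransGen (mpStep f)

def embed {n : ℕ} (x : Fin n → Bool) : Fin n → PState := fun i => PState.ofBool (x i)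

def mpReach {n : ℕ} (f : BN n) (x : Fin n → Bool) : Set (Fin n → Bool) :=
  {y | mpReachP f (embed x) (embed y)}

def cubeSet {n : ℕ} (h : Fin n → Option Bool) : Set (Fin n → Bool) :=
  {z | ∀ i b, h i = some b → z i = b}

def smaller {n : ℕ} (h h' : Fin n → Option Bool) : Prop :=
  ∀ i b, h' i = some b → h i = some b

def kClosed {n : ℕ} (f : BN n) (K : Finset (Fin n)) (h : Fin n → Option Bool) : Prop :=
  ∀ z ∈ cubeSet h, ∀ i ∈ K, h i = none ∨ h i = some (f z i)

def closedBy {n : ℕ} (f : BN n) (h : Fin n → Option Bool) : Prop :=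
  ∀ z ∈ cubeSet h, f z ∈ cubeSet h

def smallestClosed {n : ℕ} (f : BN n) (x : Fin n → Bool) (h : Fin n → Option Bool) : Prop :=
  x ∈ cubeSet h ∧ closedBy f h ∧
    ∀ h', x ∈ cubeSet h' → closedBy f h' → smaller h h'

def minClosed {n : ℕ} (f : BN n) (h : Fin n → Option Bool) : Prop :=
  closedBy f h ∧ ∀ h', closedBy f h' → smaller h' h → h' = h

def faStep {n : ℕ} (f : BN n) (x y : Fin n → Bool) : Prop :=
  ∃ i : Fin n, x i ≠ y i ∧ (∀ j, j ≠ i → x j = y j) ∧ y i = f x i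

def aStep {n : ℕ} (f : BN n) (x y : Fin n → Bool) : Prop :=
  x ≠ y ∧ ∀ i, x i ≠ y i → y i = f x i

def mnStep {n m : ℕ} (F : (Fin n → Fin (m+1)) → Fin n → ℤ)
    (x y : Fin n → Fin (m+1)) : Prop :=
  x ≠ y ∧ ∀ i, x i ≠ y i → ((y i : ℤ) = (x i : ℤ) + F x i)

def beta {n m : ℕ} (x : Fin n → Fin (m+1)) : Set (Fin n → Bool) :=
  {b | ∀ i, ((x i : ℕ) = 0 → b i = false) ∧ ((x i : ℕ) = m → b i = true)}

def refines {n m : ℕ} (F : (Fin n → Fin (m+1)) → Fin n → ℤ) (f : BN n) : Prop :=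
  ∀ x i, (F x i > 0 → ∃ b ∈ beta x, f b i = true) ∧
         (F x i < 0 → ∃ b ∈ beta x, f b i = false)

def alpha {n m : ℕ} (x : Fin n → Fin (m+1)) : Set (Fin n → PState) :=
  {p | ∀ i, ((x i : ℕ) = 0 ↔ p i = .zero) ∧ ((x i : ℕ) = m ↔ p i = .one)}

def bdStep {n : ℕ} (f : BN n) (L : Finset (Fin n)) (a b : Fin n → PState) : Prop :=
  mpStep f a b ∧ ∃ j, a j ≠ b j ∧ j ∉ L ∧ (a j).isBool ∧ ¬ (b j).isBool

def exhaustive {n : ℕ} (f : BN n) (x : Fin n → Bool) (L : Finset (Fin n))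
    (zhat : Fin n → PState) : Prop :=
  Relation.ReflTransGen (bdStep f L) (embed x) zhat ∧ ∀ z', ¬ bdStep f L zhat z'

lemma ofBool_inj : ∀ {a b : Bool}, PState.ofBool a = PState.ofBool b → a = b := by
  decide

lemma aStep_mp {n : ℕ} (f : BN n) (x y : Fin n → Bool) (h : aStep f x y) :
    mpReachP f (embed x) (embed y) := by
  classical
  obtain ⟨hne, hupd⟩ := h
  set S : Finset (Fin n) := Finset.univ.filter (fun i => x i ≠ y i) with hS
  have hmemS : ∀ i, i ∈ S ↔ x i ≠ y i := by
    intro i; simp [hS]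
  set mid : Finset (Fin n) → (Fin n → PState) :=
    fun T i => if i ∈ T then (if y i then .up else .down) else .ofBool (x i) with hmid
  have hxgamma : ∀ T : Finset (Fin n), x ∈ gamma (mid T) := by
    intro T i v hv
    simp only [hmid] at hv
    by_cases hiT : i ∈ T
    · rw [if_pos hiT] at hv
      cases hyi : y i <;> rw [hyi] at hv <;> cases v <;> simp_all [PState.ofBool]
    · rw [if_neg hiT] at hv
      exact ofBool_inj hv
  have phase1 : ∀ T : Finset (Fin n), T ⊆ S → mpReachP f (embed x) (mid T) := by
    intro T
    induction T using Finset.induction_on with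
    | empty =>
      intro _
      have : mid ∅ = embed x := by
        funext i; simp [hmid, embed]
      rw [this]
      exact Relation.ReflTransGen.refl
    | @insert a T haT ih =>
      intro hsub
      have hTsub : T ⊆ S := fun i hi => hsub (Finset.mem_insert_of_mem hi)
      have haS : a ∈ S := hsub (Finset.mem_insert_self a T)
      have hxya : x a ≠ y a := (hmemS a).1 haS
      have hfxa : y a = f x a := hupd a hxya
      refine Relation.ReflTransGen.tail (ih hTsub) ?_
      refine ⟨a, ?_, ?_, ?_⟩
      · simp only [hmid, if_neg haT, if_pos (Finset.mem_insert_self a T)]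
        cases hxa : x a <;> cases hya : y a <;> simp_all [PState.ofBool]
      · intro j hj
        simp only [hmid]
        have : j ∈ insert a T ↔ j ∈ T := by
          simp [Finset.mem_insert, hj]
        by_cases hjT : j ∈ T
        · rw [if_pos hjT, if_pos (this.2 hjT)]
        · rw [if_neg hjT, if_neg (fun h' => hjT (this.1 h'))]
      · simp only [hmid, if_neg haT, if_pos (Finset.mem_insert_self a T)]
        cases hya : y a
        · -- y a = false, x a = true : go down
          have hxa : x a = true := by
            cases hxa : x a
            · exact absurd (by rw [hxa, hya]) hxya
            · rfl
          refine Or.inr (Or.inr (Or.inl ⟨rfl, ?_, x, hxgamma T, ?_⟩))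
          · rw [hxa]; simp [PState.ofBool]
          · rw [← hfxa, hya]
        · have hxa : x a = false := by
            cases hxa : x a
            · rfl
            · exact absurd (by rw [hxa, hya]) hxya
          refine Or.inl ⟨rfl, ?_, x, hxgamma T, ?_⟩
          · rw [hxa]; simp [PState.ofBool]
          · rw [← hfxa, hya]
  set res : Finset (Fin n) → (Fin n → PState) :=
    fun T i => if i ∈ T then .ofBool (y i) else mid S i with hres
  have phase2 : ∀ T : Finset (Fin n), T ⊆ S → mpReachP f (mid S) (res T) := by
    intro T
    induction T using Finset.induction_on with
    | empty =>
      intro _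
      have : res ∅ = mid S := by funext i; simp [hres]
      rw [this]
      exact Relation.ReflTransGen.refl
    | @insert a T haT ih =>
      intro hsub
      have hTsub : T ⊆ S := fun i hi => hsub (Finset.mem_insert_of_mem hi)
      have haS : a ∈ S := hsub (Finset.mem_insert_self a T)
      refine Relation.ReflTransGen.tail (ih hTsub) ?_
      refine ⟨a, ?_, ?_, ?_⟩
      · simp only [hres, hmid, if_neg haT, if_pos (Finset.mem_insert_self a T), if_pos haS]
        cases hya : y a <;> simp [PState.ofBool]
      · intro j hj
        simp only [hres]
        have : j ∈ insert a T ↔ j ∈ T := by simp [Finset.mem_insert, hj]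
        by_cases hjT : j ∈ T
        · rw [if_pos hjT, if_pos (this.2 hjT)]
        · rw [if_neg hjT, if_neg (fun h' => hjT (this.1 h'))]
      · simp only [hres, hmid, if_neg haT, if_pos (Finset.mem_insert_self a T), if_pos haS]
        cases hya : y a
        · exact Or.inr (Or.inr (Or.inr ⟨by simp [PState.ofBool], rfl⟩))
        · exact Or.inr (Or.inl ⟨by simp [PState.ofBool], rfl⟩)
  have hresS : res S = embed y := by
    funext i
    simp only [hres, hmid, embed]
    by_cases hiS : i ∈ S
    · rw [if_pos hiS]
    · rw [if_neg hiS, if_neg hiS]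
      have : x i = y i := by
        by_contra hc
        exact hiS ((hmemS i).2 hc)
      rw [this]
  have := Relation.ReflTransGen.trans (phase1 S (le_refl S)) (phase2 S (le_refl S))
  rwa [hresS] at this

theorem stmt7 {n : ℕ} (f : BN n) (x y : Fin n → Bool)
    (h : Relation.ReflTransGen (aStep f) x y) :
    mpReachP f (embed x) (embed y) := by
  induction h with
  | refl => exact Relation.ReflTransGen.refl
  | tail _ hstep ih => exact Relation.ReflTransGen.trans ih (aStep_mp f _ _ hstep)
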